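/- arXiv:2011.02456 — 9 statements merged into one kernel-verified Lean document; each statement's English description precedes it below -/
import Mathlib

section
/- Suppose f ∈ K[X,X⁻¹] satisfies equation (★). Then there exist a natural number d ≥ 0 such that f is one of the following eight Laurent polynomials: X^{−2d}·(R_d + Q); X^{−2d}·(R_d − 1); X^{−2d}·(R_d + b + u·X^{−1}); X^{−2d}·(R_d + b − v·X^{−1}); −u·X^{2d+1} − R_d; v·X^{2d+1} − R_d; Q·X^{2d} − R_d; −X^{2d} − R_d. (For d = 0 the first two families give the constant solutions Q and −1; expanded out, these are the families (i)–(vi) of Lemma 3.4 of the paper: e.g. X^{−2d}(R_d + Q) = b + cX^{−1} + bX^{−2} + ⋯ + cX^{1−2d} + Q·X^{−2d}.) -/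
open LaurentPolynomial

/-- Equation (★): `(X² − 1)·f·f∨ = b·(X²·f∨ − f) − c·(X·f − X·f∨) + Q·(X² − 1)`,
where `Q = u·v`, `c = u − v`, `b = Q − 1` and `f∨` is the image of `f` under the
`K`-algebra involution of `K[X,X⁻¹]` sending `X` to `X⁻¹`. -/
def SatStar {K : Type*} [Field K] (u v : K) (f : K[T;T⁻¹]) : Prop :=
  (T 2 - 1) * (f * invert f) =
    C (u * v - 1) * (T 2 * invert f - f)
      - C (u - v) * (T 1 * f - T 1 * invert f)
      + C (u * v) * (T 2 - 1)

/-- `R_d = Σ_{j=1}^{d} (b·X^{2j} + c·X^{2j−1})`. -/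
noncomputable def Rpoly {K : Type*} [Field K] (u v : K) (d : ℕ) : K[T;T⁻¹] :=
  ∑ j ∈ Finset.range d, (C (u * v - 1) * T (2 * (j : ℤ) + 2) + C (u - v) * T (2 * (j : ℤ) + 1))

/-!
Completing the square, (★) says that `G = (X² − 1)·f − (b·X² + c·X)` satisfies `G·G∨ = P·P∨`
with `P = X² − c·X − Q = (X − u)(X + v)`. Write `G = Xⁿ·g` with `g` a polynomial and `g(0) ≠ 0`;
comparing `g·reflect N g` with `P·reflect N P` gives `deg g ≤ 2` and `g₂·g₀ = P₂·P₀ = −Q`.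
Since `X² ≡ 1` modulo `X² − 1`, the polynomial `q = X^(n mod 2)·g` satisfies
`q ≡ −(b·X² + c·X)`, so `q = (X² − 1)·h − (b·X² + c·X)` with `deg h ≤ 1`, and the coefficient
condition leaves only `h ∈ {Q, −1, −u·X, v·X}`. Undoing the even shift with the telescoping
identity `(X² − 1)·R_d = (b·X² + c·X)·(X^(2d) − 1)` produces the eight families.
-/

open Polynomial (X toLaurent toLaurent_injective reflect)
open scoped Polynomial

section Laurent

variable {R : Type*} [CommRing R]

theorem LaurentPolynomial.T_two_sub_one_dvd (k : ℤ) : (T 2 - 1 : R[T;T⁻¹]) ∣ T (2 * k) - 1 := by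
  have hnat (n : ℕ) : (T 2 - 1 : R[T;T⁻¹]) ∣ T (2 * n) - 1 := by
    simpa [T_pow, mul_comm] using sub_one_dvd_pow_sub_one (T 2 : R[T;T⁻¹]) n
  obtain ⟨n, rfl | rfl⟩ := Int.eq_nat_or_neg k
  · exact hnat n
  · have hinv : T (2 * -(n : ℤ)) * T (2 * n) = (1 : R[T;T⁻¹]) := by
      rw [← T_add, ← mul_add, neg_add_cancel, mul_zero, T_zero]
    have : T (2 * -(n : ℤ)) - 1 = -T (2 * -(n : ℤ)) * (T (2 * n) - 1 : R[T;T⁻¹]) := by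
      linear_combination hinv
    exact this ▸ dvd_mul_of_dvd_right (hnat n) _

theorem LaurentPolynomial.T_two_sub_one_ne_zero [Nontrivial R] : (T 2 - 1 : R[T;T⁻¹]) ≠ 0 := by
  have h : (T 2 - 1 : R[T;T⁻¹]) = toLaurent (X ^ 2 - Polynomial.C 1) := by
    simp [Polynomial.toLaurent_X_pow]
  rw [h, Polynomial.toLaurent_ne_zero]
  exact Polynomial.X_pow_sub_C_ne_zero two_pos 1

theorem LaurentPolynomial.exists_eq_T_mul_toLaurent [IsDomain R] {f : R[T;T⁻¹]} (hf : f ≠ 0) :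
    ∃ (n : ℤ) (g : R[X]), g.coeff 0 ≠ 0 ∧ f = T n * toLaurent g := by
  obtain ⟨m, f', hf'⟩ := exists_T_pow f
  have hf'0 : f' ≠ 0 := by
    rintro rfl
    exact hf ((isUnit_T (m : ℤ)).mul_left_eq_zero.mp (by simpa using hf'.symm))
  obtain ⟨g, hg, hX⟩ := f'.exists_eq_pow_rootMultiplicity_mul_and_not_dvd hf'0 0
  simp only [map_zero, sub_zero] at hg hX
  generalize f'.rootMultiplicity 0 = r at hg
  refine ⟨r - m, g, mt Polynomial.X_dvd_iff.mpr hX, ?_⟩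
  calc f = toLaurent f' * T (-m) := by
        rw [hf', mul_assoc, ← T_add, add_neg_cancel, T_zero, mul_one]
    _ = T (r - m) * toLaurent g := by
      rw [hg, map_mul, Polynomial.toLaurent_X_pow, T_sub]
      ring

end Laurent

namespace Polynomial

variable {R : Type*} [CommRing R] {g p q : R[X]} {N : ℕ}

theorem dvd_of_toLaurent_dvd (hp : IsCoprime p X) (h : toLaurent p ∣ toLaurent q) : p ∣ q := by
  obtain ⟨w, hw⟩ := h
  obtain ⟨n, w', hw'⟩ := exists_T_pow w
  have : q * X ^ n = p * w' := toLaurent_injective <| by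
    rw [map_mul, map_mul, hw', hw, toLaurent_X_pow, mul_assoc]
  exact hp.pow_right.dvd_of_dvd_mul_right ⟨w', this⟩

theorem toLaurent_reflect (hp : p.natDegree ≤ N) :
    toLaurent (reflect N p) = invert (toLaurent p) * T N := by
  have h := reflect_mul p 1 le_rfl (natDegree_one.trans_le (Nat.zero_le (N - p.natDegree)))
  rw [Nat.add_sub_cancel' hp, mul_one, reflect_one] at h
  rw [h, map_mul, ← reverse, toLaurent_reverse, toLaurent_X_pow, mul_assoc, ← T_add]
  congr 2
  omega

theorem natDegree_reflect_le_of_le (hp : p.natDegree ≤ N) : (reflect N p).natDegree ≤ N :=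
  natDegree_reflect_le.trans (max_le le_rfl hp)

theorem natDegree_reflect_eq (hg : g.natDegree ≤ N) (hg0 : g.coeff 0 ≠ 0) :
    (reflect N g).natDegree = N :=
  le_antisymm (natDegree_reflect_le_of_le hg)
    (le_natDegree_of_ne_zero (by rwa [coeff_reflect, revAt_le le_rfl, Nat.sub_self]))

theorem mul_reflect_eq_of_mul_invert_eq (hg : g.natDegree ≤ N) (hp : p.natDegree ≤ N)
    (h : toLaurent g * invert (toLaurent g) = toLaurent p * invert (toLaurent p)) :
    g * reflect N g = p * reflect N p :=
  toLaurent_injective <| by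
    rw [map_mul, map_mul, toLaurent_reflect hg, toLaurent_reflect hp, ← mul_assoc, ← mul_assoc, h]

theorem natDegree_le_of_mul_invert_eq [IsDomain R] (hg0 : g.coeff 0 ≠ 0)
    (h : toLaurent g * invert (toLaurent g) = toLaurent p * invert (toLaurent p)) :
    g.natDegree ≤ p.natDegree := by
  set N := max g.natDegree p.natDegree
  have hg : g.natDegree ≤ N := le_max_left _ _
  have hp : p.natDegree ≤ N := le_max_right _ _
  have hgne : g ≠ 0 := fun h0 => hg0 (by simp [h0])
  have : g.natDegree + N ≤ p.natDegree + N :=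
    calc g.natDegree + N = (g * reflect N g).natDegree := by
          rw [natDegree_mul hgne (by rwa [Ne, reflect_eq_zero_iff]), natDegree_reflect_eq hg hg0]
      _ = (p * reflect N p).natDegree := by rw [mul_reflect_eq_of_mul_invert_eq hg hp h]
      _ ≤ p.natDegree + N := natDegree_mul_le.trans (by grw [natDegree_reflect_le_of_le hp])
  omega

theorem coeff_mul_coeff_zero_eq_of_mul_invert_eq (hg : g.natDegree ≤ N) (hp : p.natDegree ≤ N)
    (h : toLaurent g * invert (toLaurent g) = toLaurent p * invert (toLaurent p)) :
    g.coeff N * g.coeff 0 = p.coeff N * p.coeff 0 := by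
  have := congrArg (coeff · (N + N)) (mul_reflect_eq_of_mul_invert_eq hg hp h)
  simpa [coeff_mul_add_eq_of_natDegree_le hg (natDegree_reflect_le_of_le hg),
    coeff_mul_add_eq_of_natDegree_le hp (natDegree_reflect_le_of_le hp), coeff_reflect] using this

end Polynomial

namespace SatStar

variable {K : Type*} [Field K] (u v : K)

noncomputable def offset : K[X] := Polynomial.C (u * v - 1) * X ^ 2 + Polynomial.C (u - v) * X

noncomputable def quadratic : K[X] := X ^ 2 - Polynomial.C (u - v) * X - Polynomial.C (u * v)

noncomputable def residual (f : K[T;T⁻¹]) : K[T;T⁻¹] := (T 2 - 1) * f - toLaurent (offset u v)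

theorem toLaurent_offset : toLaurent (offset u v) = C (u * v - 1) * T 2 + C (u - v) * T 1 := by
  simp [offset, Polynomial.toLaurent_X_pow]

theorem toLaurent_quadratic : toLaurent (quadratic u v) = T 2 - C (u - v) * T 1 - C (u * v) := by
  simp [quadratic, Polynomial.toLaurent_X_pow]

theorem residual_toLaurent (h : K[X]) :
    residual u v (toLaurent h) = toLaurent ((X ^ 2 - 1) * h - offset u v) := by
  simp [residual, Polynomial.toLaurent_X_pow]

theorem natDegree_offset_le : (offset u v).natDegree ≤ 2 := by
  unfold offset; compute_degree

theorem natDegree_quadratic_le : (quadratic u v).natDegree ≤ 2 := by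
  unfold quadratic; compute_degree

theorem quadratic_ne_zero : quadratic u v ≠ 0 := by
  intro h
  simpa [quadratic] using congrArg (Polynomial.coeff · 2) h

theorem sub_offset_eq (a b : K) :
    (X ^ 2 - 1) * (Polynomial.C a * X + Polynomial.C b) - offset u v =
      Polynomial.C a * X ^ 3 + Polynomial.C (b - (u * v - 1)) * X ^ 2 +
        Polynomial.C (-a - (u - v)) * X + Polynomial.C (-b) := by
  simp only [offset, map_sub, map_neg]
  ring

theorem Rpoly_succ (d : ℕ) : Rpoly u v (d + 1) =
    Rpoly u v d + (C (u * v - 1) * T (2 * d) * T 2 + C (u - v) * T (2 * d) * T 1) := by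
  rw [Rpoly, Finset.sum_range_succ, ← Rpoly, mul_assoc, mul_assoc, ← T_add, ← T_add]

theorem T_two_sub_one_mul_Rpoly (d : ℕ) :
    (T 2 - 1) * Rpoly u v d = toLaurent (offset u v) * (T (2 * d) - 1) := by
  induction d with
  | zero => simp [Rpoly]
  | succ d ih =>
    have hT : (T (2 * ((d + 1 : ℕ) : ℤ)) : K[T;T⁻¹]) = T (2 * d) * T 2 := by
      rw [← T_add]; push_cast; ring_nf
    rw [Rpoly_succ, hT, mul_add, ih, toLaurent_offset]
    ring

-- For negative shifts these turn the odd `h = −u·X, v·X` into the families with an `X⁻¹` term.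
theorem T_neg_two_mul_residual_neg_C_mul_T :
    T (-2) * residual u v (-(C u * T 1)) = residual u v (C (u * v - 1) - C v * T (-1)) := by
  have htz : (T 1 : K[T;T⁻¹]) * T (-1) = 1 := by rw [← T_add]; simp
  have h2 : (T 2 : K[T;T⁻¹]) = T 1 ^ 2 := by rw [T_pow]; norm_num
  have hm2 : (T (-2) : K[T;T⁻¹]) = T (-1) ^ 2 := by rw [T_pow]; norm_num
  simp only [residual, toLaurent_offset, h2, hm2, map_sub C u v]
  linear_combination (-(C u) * T 1 * (T 1 * T (-1) + 1) + C u * T (-1) -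
    C (u * v - 1) * (T 1 * T (-1) + 1) - (C u - C v) * T (-1) + C v * T 1) * htz

theorem T_neg_two_mul_residual_C_mul_T :
    T (-2) * residual u v (C v * T 1) = residual u v (C (u * v - 1) + C u * T (-1)) := by
  have htz : (T 1 : K[T;T⁻¹]) * T (-1) = 1 := by rw [← T_add]; simp
  have h2 : (T 2 : K[T;T⁻¹]) = T 1 ^ 2 := by rw [T_pow]; norm_num
  have hm2 : (T (-2) : K[T;T⁻¹]) = T (-1) ^ 2 := by rw [T_pow]; norm_num
  simp only [residual, toLaurent_offset, h2, hm2, map_sub C u v]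
  linear_combination (-(C u) * T 1 - C u * T (-1) - C (u * v - 1) * (T 1 * T (-1) + 1) +
    C v * T 1 * (T 1 * T (-1) + 1)) * htz

variable {u v} {f : K[T;T⁻¹]}

theorem residual_mul_invert (hf : SatStar u v f) :
    residual u v f * invert (residual u v f) =
      toLaurent (quadratic u v) * invert (toLaurent (quadratic u v)) := by
  have h2 : (T 2 : K[T;T⁻¹]) * T (-2) = 1 := by rw [← T_add]; simp
  have h1 : (T 2 : K[T;T⁻¹]) * T (-1) = T 1 := by rw [← T_add]; norm_num
  have hG : T 2 * invert (residual u v f) =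
      (1 - T 2) * invert f - C (u * v - 1) - C (u - v) * T 1 := by
    simp only [residual, toLaurent_offset, map_sub invert, map_add invert, map_mul invert,
      map_one invert, invert_T, invert_C]
    linear_combination (invert f - C (u * v - 1)) * h2 - C (u - v) * h1
  have hP : T 2 * invert (toLaurent (quadratic u v)) =
      1 - C (u - v) * T 1 - C (u * v) * T 2 := by
    simp only [toLaurent_quadratic, map_sub invert, map_mul invert, invert_T, invert_C]
    linear_combination h2 - C (u - v) * h1
  rw [← (isUnit_T 2).mul_right_inj, mul_left_comm, hG, mul_left_comm, hP]
  unfold SatStar at hf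
  simp only [residual, toLaurent_offset, toLaurent_quadratic, map_sub, map_mul, map_one] at hf ⊢
  linear_combination (-(T 2 - 1)) * hf

theorem exists_residual_eq_T_mul_toLaurent (hf : SatStar u v f) :
    ∃ (n : ℤ) (g : K[X]), g.natDegree ≤ 2 ∧ g.coeff 2 * g.coeff 0 = -(u * v) ∧
      residual u v f = T n * toLaurent g := by
  have hnorm := hf.residual_mul_invert
  have hne : residual u v f ≠ 0 := by
    intro h0
    rw [h0, zero_mul, eq_comm, mul_eq_zero, map_eq_zero_iff _ invert.injective, or_self,
      Polynomial.toLaurent_eq_zero] at hnorm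
    exact quadratic_ne_zero u v hnorm
  obtain ⟨n, g, hg0, hG⟩ := exists_eq_T_mul_toLaurent hne
  have hgnorm : toLaurent g * invert (toLaurent g) =
      toLaurent (quadratic u v) * invert (toLaurent (quadratic u v)) := by
    rw [← hnorm, hG, map_mul, invert_T, mul_mul_mul_comm, ← T_add, add_neg_cancel, T_zero,
      one_mul]
  have hdeg :=
    (Polynomial.natDegree_le_of_mul_invert_eq hg0 hgnorm).trans (natDegree_quadratic_le u v)
  refine ⟨n, g, hdeg, ?_, hG⟩
  simpa [quadratic] using
    Polynomial.coeff_mul_coeff_zero_eq_of_mul_invert_eq hdeg (natDegree_quadratic_le u v) hgnorm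

theorem exists_eq_sub_offset_of_residual_eq {q : K[X]} {k : ℤ} (hq : q.natDegree ≤ 3)
    (hk : residual u v f = T (2 * k) * toLaurent q) :
    ∃ h : K[X], h.natDegree ≤ 1 ∧ q = (X ^ 2 - 1) * h - offset u v := by
  obtain ⟨w, hw⟩ := T_two_sub_one_dvd (R := K) (-k)
  have hinv : (T (2 * k) : K[T;T⁻¹]) * T (2 * -k) = 1 := by
    rw [← T_add, ← mul_add, add_neg_cancel, mul_zero, T_zero]
  have hdvd : toLaurent (X ^ 2 - 1 : K[X]) ∣ toLaurent (q + offset u v) := by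
    refine ⟨T (2 * -k) * f - w * toLaurent (offset u v), ?_⟩
    simp only [residual] at hk
    simp only [map_sub, map_add, map_one, Polynomial.toLaurent_X_pow, Nat.cast_ofNat]
    linear_combination (-T (2 * -k)) * hk - toLaurent q * hinv - toLaurent (offset u v) * hw
  obtain ⟨h, hh⟩ := Polynomial.dvd_of_toLaurent_dvd ⟨-1, X, by ring⟩ hdvd
  refine ⟨h, ?_, eq_sub_of_add_eq hh⟩
  rcases eq_or_ne h 0 with rfl | hne
  · simp
  have hX : (X ^ 2 - 1 : K[X]).natDegree = 2 := by
    simpa using Polynomial.natDegree_X_pow_sub_C (n := 2) (r := (1 : K))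
  have hX0 : (X ^ 2 - 1 : K[X]) ≠ 0 := by
    simpa using Polynomial.X_pow_sub_C_ne_zero two_pos (1 : K)
  have hsum : (q + offset u v).natDegree ≤ 3 :=
    (Polynomial.natDegree_add_le _ _).trans (max_le hq (by grw [natDegree_offset_le]; omega))
  rw [hh, Polynomial.natDegree_mul hX0 hne, hX] at hsum
  omega

theorem eq_C_or_eq_neg_one_of_eq_sub_offset {g h : K[X]} (hh : h.natDegree ≤ 1)
    (hg : g = (X ^ 2 - 1) * h - offset u v) (hdeg : g.natDegree ≤ 2)
    (hc : g.coeff 2 * g.coeff 0 = -(u * v)) :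
    h = Polynomial.C (u * v) ∨ h = -1 := by
  rw [Polynomial.eq_X_add_C_of_natDegree_le_one hh, sub_offset_eq] at hg
  have h3 : g.coeff 3 = 0 := Polynomial.coeff_eq_zero_of_natDegree_lt (by omega)
  simp only [hg, Polynomial.coeff_add, Polynomial.coeff_C_mul_X_pow, Polynomial.coeff_C_mul_X,
    Polynomial.coeff_C] at h3 hc
  norm_num at h3 hc
  have hroots : (h.coeff 0 - u * v) * (h.coeff 0 + 1) = 0 := by linear_combination hc
  rw [Polynomial.eq_X_add_C_of_natDegree_le_one hh, h3, map_zero, zero_mul, zero_add]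
  rcases mul_eq_zero.mp hroots with he | he
  · exact Or.inl (by rw [sub_eq_zero.mp he])
  · exact Or.inr (by rw [eq_neg_of_add_eq_zero_left he, map_neg, map_one])

theorem eq_neg_C_mul_X_or_eq_C_mul_X_of_X_mul_eq_sub_offset {g h : K[X]} (hh : h.natDegree ≤ 1)
    (hg : X * g = (X ^ 2 - 1) * h - offset u v) (hc : g.coeff 2 * g.coeff 0 = -(u * v)) :
    h = -(Polynomial.C u * X) ∨ h = Polynomial.C v * X := by
  rw [Polynomial.eq_X_add_C_of_natDegree_le_one hh, sub_offset_eq] at hg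
  have h0 := congrArg (Polynomial.coeff · 0) hg
  have h1 := congrArg (Polynomial.coeff · 1) hg
  have h3 := congrArg (Polynomial.coeff · 3) hg
  simp only [Polynomial.coeff_X_mul, Polynomial.coeff_add, Polynomial.coeff_C_mul_X_pow,
    Polynomial.coeff_C_mul_X, Polynomial.coeff_C, Polynomial.coeff_X_mul_zero] at h0 h1 h3
  norm_num at h0 h1 h3
  have hroots : (h.coeff 1 + u) * (h.coeff 1 - v) = 0 := by
    rw [h1, h3] at hc
    linear_combination -hc
  rw [Polynomial.eq_X_add_C_of_natDegree_le_one hh, h0, map_zero, add_zero]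
  rcases mul_eq_zero.mp hroots with he | he
  · exact Or.inl (by rw [eq_neg_of_add_eq_zero_left he, map_neg, neg_mul])
  · exact Or.inr (by rw [sub_eq_zero.mp he])

theorem exists_residual_eq_T_mul_residual (hf : SatStar u v f) :
    ∃ k : ℤ, ∃ h ∈ ({C (u * v), -1, -(C u * T 1), C v * T 1} : Set K[T;T⁻¹]),
      residual u v f = T (2 * k) * residual u v h := by
  obtain ⟨n, g, hdeg, hc, hG⟩ := hf.exists_residual_eq_T_mul_toLaurent
  obtain ⟨k, rfl | rfl⟩ := Int.even_or_odd' n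
  · obtain ⟨h, hh, hq⟩ := exists_eq_sub_offset_of_residual_eq (by omega) hG
    refine ⟨k, toLaurent h, ?_, by rw [hG, residual_toLaurent, hq]⟩
    rcases eq_C_or_eq_neg_one_of_eq_sub_offset hh hq hdeg hc with rfl | rfl <;> simp
  · have hG' : residual u v f = T (2 * k) * toLaurent (X * g) := by
      rw [hG, T_add, map_mul, Polynomial.toLaurent_X, mul_assoc]
    have hdeg' : (X * g).natDegree ≤ 3 :=
      Polynomial.natDegree_mul_le.trans (by rw [Polynomial.natDegree_X]; omega)
    obtain ⟨h, hh, hq⟩ := exists_eq_sub_offset_of_residual_eq hdeg' hG'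
    refine ⟨k, toLaurent h, ?_, by rw [hG', residual_toLaurent, hq]⟩
    rcases eq_neg_C_mul_X_or_eq_C_mul_X_of_X_mul_eq_sub_offset hh hq hc with rfl | rfl <;>
      simp [Polynomial.toLaurent_X]

theorem exists_nat_residual_eq (hf : SatStar u v f) : ∃ d : ℕ,
    (∃ h ∈ ({C (u * v), -1, -(C u * T 1), C v * T 1} : Set K[T;T⁻¹]),
      residual u v f = T (2 * d) * residual u v h) ∨
    (∃ h ∈ ({C (u * v), -1, C (u * v - 1) + C u * T (-1), C (u * v - 1) - C v * T (-1)} :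
        Set K[T;T⁻¹]),
      residual u v f = T (-(2 * d)) * residual u v h) := by
  obtain ⟨k, h, hh, hk⟩ := hf.exists_residual_eq_T_mul_residual
  cases k with
  | ofNat d => exact ⟨d, Or.inl ⟨h, hh, hk⟩⟩
  | negSucc d =>
    have hT : (T (2 * Int.negSucc d) : K[T;T⁻¹]) = T (-(2 * ((d + 1 : ℕ) : ℤ))) := by
      rw [Int.negSucc_eq]; push_cast; ring_nf
    have hT' : (T (2 * Int.negSucc d) : K[T;T⁻¹]) = T (-(2 * (d : ℤ))) * T (-2) := by
      rw [← T_add, Int.negSucc_eq]; ring_nf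
    rcases hh with rfl | rfl | rfl | rfl
    · exact ⟨d + 1, Or.inr ⟨C (u * v), by simp, by rwa [← hT]⟩⟩
    · exact ⟨d + 1, Or.inr ⟨-1, by simp, by rwa [← hT]⟩⟩
    · refine ⟨d, Or.inr ⟨C (u * v - 1) - C v * T (-1), by simp, ?_⟩⟩
      rw [← T_neg_two_mul_residual_neg_C_mul_T, ← mul_assoc, ← hT', hk]
    · refine ⟨d, Or.inr ⟨C (u * v - 1) + C u * T (-1), by simp, ?_⟩⟩
      rw [← T_neg_two_mul_residual_C_mul_T, ← mul_assoc, ← hT', hk]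

theorem eq_T_mul_sub_Rpoly {h : K[T;T⁻¹]} (d : ℕ)
    (hd : residual u v f = T (2 * d) * residual u v h) : f = T (2 * d) * h - Rpoly u v d := by
  apply mul_left_cancel₀ T_two_sub_one_ne_zero
  unfold residual at hd
  linear_combination hd + T_two_sub_one_mul_Rpoly u v d

theorem eq_T_neg_mul_Rpoly_add {h : K[T;T⁻¹]} (d : ℕ)
    (hd : residual u v f = T (-(2 * d)) * residual u v h) :
    f = T (-(2 * d)) * (Rpoly u v d + h) := by
  have hinv : (T (-(2 * d)) : K[T;T⁻¹]) * T (2 * d) = 1 := by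
    rw [← T_add, neg_add_cancel, T_zero]
  apply mul_left_cancel₀ T_two_sub_one_ne_zero
  unfold residual at hd
  linear_combination hd - T (-(2 * d)) * T_two_sub_one_mul_Rpoly u v d -
    toLaurent (offset u v) * hinv

end SatStar

/-- The complete list of solutions of equation (★) (Lemma 3.4 of the paper). -/
theorem statement0 {K : Type*} [Field K] (u v : K) (f : K[T;T⁻¹])
    (hf : SatStar u v f) :
    ∃ d : ℕ,
      f = T (-(2 * (d : ℤ))) * (Rpoly u v d + C (u * v)) ∨
      f = T (-(2 * (d : ℤ))) * (Rpoly u v d - 1) ∨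
      f = T (-(2 * (d : ℤ))) * (Rpoly u v d + C (u * v - 1) + C u * T (-1)) ∨
      f = T (-(2 * (d : ℤ))) * (Rpoly u v d + C (u * v - 1) - C v * T (-1)) ∨
      f = -(C u) * T (2 * (d : ℤ) + 1) - Rpoly u v d ∨
      f = C v * T (2 * (d : ℤ) + 1) - Rpoly u v d ∨
      f = C (u * v) * T (2 * (d : ℤ)) - Rpoly u v d ∨
      f = -T (2 * (d : ℤ)) - Rpoly u v d := by
  obtain ⟨d, ⟨h, hh, hd⟩ | ⟨h, hh, hd⟩⟩ := hf.exists_nat_residual_eq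
  · obtain rfl := SatStar.eq_T_mul_sub_Rpoly d hd
    refine ⟨d, ?_⟩
    rcases hh with rfl | rfl | rfl | rfl
    · iterate 6 right
      left; ring
    · iterate 7 right
      ring
    · iterate 4 right
      left; rw [T_add]; ring
    · iterate 5 right
      left; rw [T_add]; ring
  · obtain rfl := SatStar.eq_T_neg_mul_Rpoly_add d hd
    refine ⟨d, ?_⟩
    rcases hh with rfl | rfl | rfl | rfl
    · left; rfl
    · right; left; ring
    · right; right; left; ring
    · right; right; right; left; ring
end

section
/- If a Laurent polynomial of the form f = a₀ + a₋₁·X⁻¹ (with a₀, a₋₁ ∈ K and a₋₁ ≠ 0) satisfies equation (★), then a₀ = b and either a₋₁ = u or a₋₁ = −v. -/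
/-!
Substituting `f = a₀ + a₋₁X⁻¹` into (★), the difference of its two sides is
`p·(X³ − X⁻¹) + q·(X² − 1)` with `p = a₋₁·(a₀ − b)` and `q = a₀² + a₋₁² − b·a₀ − c·a₋₁ − Q`,
so `p = q = 0`. As `a₋₁ ≠ 0`, `p = 0` gives `a₀ = b`, and then `q = (a₋₁ − u)·(a₋₁ + v)`.
-/

open LaurentPolynomial

theorem LaurentPolynomial.C_mul_T_three_sub_add_C_mul_T_two_sub_eq_zero_iff
    {R : Type*} [CommRing R] (p q : R) :
    C p * (T 3 - T (-1)) + C q * (T 2 - 1) = 0 ↔ p = 0 ∧ q = 0 := by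
  refine ⟨fun h ↦ ⟨?_, ?_⟩, fun ⟨hp, hq⟩ ↦ by simp [hp, hq]⟩
  · simpa [← smul_eq_C_mul, ← T_zero] using congrArg (·.coeff 3) h
  · simpa [← smul_eq_C_mul, ← T_zero] using congrArg (·.coeff 2) h

theorem satStar_C_add_C_mul_T_neg_one_iff {K : Type*} [Field K] (u v a b : K) :
    SatStar u v (C a + C b * T (-1)) ↔
      C (a * b - (u * v - 1) * b) * (T 3 - T (-1))
        + C (a ^ 2 + b ^ 2 - (u * v - 1) * a - (u - v) * b - u * v) * (T 2 - 1) = 0 := by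
  have hT : (T 1 : K[T;T⁻¹]) * T (-1) = 1 := by rw [← T_add]; simp
  have hT2 : (T 2 : K[T;T⁻¹]) = T 1 ^ 2 := by rw [T_pow]; norm_num
  have hT3 : (T 3 : K[T;T⁻¹]) = T 1 ^ 3 := by rw [T_pow]; norm_num
  rw [SatStar, ← sub_eq_zero]
  refine Eq.congr_left ?_
  simp only [map_add, map_mul, map_sub, map_pow, map_one, invert_C, invert_T, neg_neg, hT2, hT3]
  linear_combination (C b ^ 2 * T 1 ^ 2 + C a * C b * T 1 + (C u - C v) * C b - C b ^ 2) * hT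

/-- A solution of (★) of the form `a₀ + a₋₁·X⁻¹` with `a₋₁ ≠ 0` has `a₀ = b`,
and `a₋₁ = u` or `a₋₁ = −v`. -/
theorem statement4 {K : Type*} [Field K] (u v : K) (a₀ aneg : K) (ha : aneg ≠ 0)
    (hf : SatStar u v (C a₀ + C aneg * T (-1))) :
    a₀ = u * v - 1 ∧ (aneg = u ∨ aneg = -v) := by
  obtain ⟨h₃, h₂⟩ := (C_mul_T_three_sub_add_C_mul_T_two_sub_eq_zero_iff _ _).1
    ((satStar_C_add_C_mul_T_neg_one_iff u v a₀ aneg).1 hf)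
  obtain rfl : a₀ = u * v - 1 := mul_right_cancel₀ ha (by linear_combination h₃)
  have hroots : (aneg - u) * (aneg + v) = 0 := by linear_combination h₂
  refine ⟨rfl, (mul_eq_zero.1 hroots).imp (fun h ↦ ?_) (fun h ↦ ?_)⟩
  · linear_combination h
  · linear_combination h
end

section
/- If a nonzero Laurent polynomial f satisfies equation (★), then f cannot simultaneously have a nonzero coefficient in some positive degree and a nonzero coefficient in some negative degree; that is, either the support of f is contained in the non-positive integers, or the support of f is contained in the non-negative integers. -/
/-!
Let `d ≥ 1` and `e ≤ -1` be the largest and smallest degrees of `f`. In degree `d - e + 2` the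
left side of (★) has the coefficient `f_d f_e ≠ 0`, while every term on the right side has degree
at most `max (d + 1) (2 - e) < d - e + 2`.
-/

open LaurentPolynomial

namespace LaurentPolynomial

section Semiring

variable {R : Type*} [Semiring R]

lemma coeff_T_mul (n k : ℤ) (p : R[T;T⁻¹]) : (T n * p).coeff k = p.coeff (k - n) := by
  rw [T, AddMonoidAlgebra.coeff_single_mul_apply, one_mul, neg_add_eq_sub]

lemma coeff_C_mul (a : R) (p : R[T;T⁻¹]) (k : ℤ) : (C a * p).coeff k = a * p.coeff k := by
  rw [← single_eq_C, AddMonoidAlgebra.coeff_single_mul_apply, neg_zero, zero_add]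

lemma coeff_mul_eq_zero_of_lt {p q : R[T;T⁻¹]} {a b k : ℤ}
    (hp : ∀ i ∈ p.coeff.support, i ≤ a) (hq : ∀ j ∈ q.coeff.support, j ≤ b) (hk : a + b < k) :
    (p * q).coeff k = 0 := by
  classical
  refine Finsupp.notMem_support_iff.mp fun hmem => ?_
  obtain ⟨i, hi, j, hj, rfl⟩ :=
    Finset.mem_add.mp (AddMonoidAlgebra.support_coeff_mul_subset p q hmem)
  have := hp i hi; have := hq j hj; omega

lemma coeff_mul_add_of_le {p q : R[T;T⁻¹]} {a b : ℤ}
    (hp : ∀ i ∈ p.coeff.support, i ≤ a) (hq : ∀ j ∈ q.coeff.support, j ≤ b) :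
    (p * q).coeff (a + b) = p.coeff a * q.coeff b :=
  AddMonoidAlgebra.coeff_mul_add_of_uniqueAdd fun i j hi hj hij => by
    have := hp i hi; have := hq j hj; omega

end Semiring

section CommRing

variable {R : Type*} [CommRing R] {f : R[T;T⁻¹]} {d e : ℤ}

lemma mem_support_invert {k : ℤ} : k ∈ (invert f).coeff.support ↔ -k ∈ f.coeff.support := by
  simp

lemma coeff_T_two_sub_one_mul_mul_invert (hd : ∀ k ∈ f.coeff.support, k ≤ d)
    (he : ∀ k ∈ f.coeff.support, e ≤ k) :
    ((T 2 - 1) * (f * invert f)).coeff (d - e + 2) = f.coeff d * f.coeff e := by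
  have hinv : ∀ k ∈ (invert f).coeff.support, k ≤ -e := fun k hk => by
    have := he _ (mem_support_invert.mp hk); omega
  rw [sub_mul, one_mul, AddMonoidAlgebra.coeff_sub, Finsupp.sub_apply, coeff_T_mul,
    show d - e + 2 - 2 = d + -e by ring, coeff_mul_add_of_le hd hinv,
    coeff_mul_eq_zero_of_lt hd hinv (by omega), invert_apply, neg_neg, sub_zero]

lemma coeff_starRhs_eq_zero (a b c : R) (hd : ∀ k ∈ f.coeff.support, k ≤ d)
    (he : ∀ k ∈ f.coeff.support, e ≤ k) (hd0 : 0 < d) (he0 : e ≤ 0) :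
    (C a * (T 2 * invert f - f) - C b * (T 1 * f - T 1 * invert f) + C c * (T 2 - 1)).coeff
      (d - e + 2) = 0 := by
  have hout : ∀ k, d < k ∨ k < e → f.coeff k = 0 := fun k hk =>
    Finsupp.notMem_support_iff.mp fun hmem => by have := hd k hmem; have := he k hmem; omega
  rw [← T_zero]
  simp only [AddMonoidAlgebra.coeff_add, AddMonoidAlgebra.coeff_sub, Finsupp.add_apply,
    Finsupp.sub_apply, coeff_C_mul, coeff_T_mul, invert_apply, T_apply]
  rw [hout _ (by omega), hout _ (by omega), hout _ (by omega), hout _ (by omega),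
    if_neg (by omega), if_neg (by omega)]
  ring

end CommRing

end LaurentPolynomial

lemma SatStar.coeff_mul_coeff_eq_zero {K : Type*} [Field K] {u v : K} {f : K[T;T⁻¹]} {d e : ℤ}
    (hf : SatStar u v f) (hd : ∀ k ∈ f.coeff.support, k ≤ d)
    (he : ∀ k ∈ f.coeff.support, e ≤ k) (hd0 : 0 < d) (he0 : e ≤ 0) :
    f.coeff d * f.coeff e = 0 := by
  have := congrArg (·.coeff (d - e + 2)) hf
  simpa only [coeff_T_two_sub_one_mul_mul_invert hd he,
    coeff_starRhs_eq_zero _ _ _ hd he hd0 he0] using this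

theorem statement5_general {K : Type*} [Field K] (u v : K) (f : K[T;T⁻¹])
    (hf : SatStar u v f) :
    (∀ n ∈ f.coeff.support, n ≤ 0) ∨ (∀ n ∈ f.coeff.support, 0 ≤ n) := by
  by_contra! hmixed
  obtain ⟨⟨n, hn, hn0⟩, m, hm, hm0⟩ := hmixed
  have hne : f.coeff.support.Nonempty := ⟨n, hn⟩
  have hd := fun k hk => f.coeff.support.le_max' k hk
  have he := fun k hk => f.coeff.support.min'_le k hk
  refine mul_ne_zero (Finsupp.mem_support_iff.mp (f.coeff.support.max'_mem hne))
    (Finsupp.mem_support_iff.mp (f.coeff.support.min'_mem hne))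
    (hf.coeff_mul_coeff_eq_zero hd he (hn0.trans_le (hd n hn)) ((he m hm).trans hm0.le))

/-- A nonzero solution of (★) has support contained in the non-positive
integers or in the non-negative integers. -/
theorem statement5 {K : Type*} [Field K] (u v : K) (f : K[T;T⁻¹]) (hf0 : f ≠ 0)
    (hf : SatStar u v f) :
    (∀ n ∈ f.coeff.support, n ≤ 0) ∨ (∀ n ∈ f.coeff.support, 0 ≤ n) :=
  statement5_general u v f hf
end

section
/- If a Laurent polynomial f satisfies equation (★) and f has a nonzero coefficient in some positive degree, then the coefficient of X⁰ in f is zero. -/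
open LaurentPolynomial

namespace LaurentPolynomial

variable {R : Type*}

section Semiring

variable [Semiring R] {p q : R[T;T⁻¹]}

theorem degree_add_le : (p + q).degree ≤ max p.degree q.degree :=
  AddMonoidAlgebra.supDegree_add_le (D := WithBot.some)

theorem degree_mul_le : (p * q).degree ≤ p.degree + q.degree :=
  AddMonoidAlgebra.supDegree_mul_le (D := WithBot.some) fun _ _ => WithBot.coe_add ..

theorem degree_mul_le_of_le {a b : ℤ} (hp : p.degree ≤ a) (hq : q.degree ≤ b) :
    (p * q).degree ≤ ↑(a + b) :=
  degree_mul_le.trans <| (add_le_add hp hq).trans_eq (WithBot.coe_add a b).symm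

theorem degree_T_mul_le_of_le {k n m : ℤ} (h : p.degree ≤ n) (hm : k + n ≤ m) :
    (T k * p).degree ≤ ↑m :=
  (degree_mul_le_of_le (degree_T_le k) h).trans (WithBot.coe_le_coe.2 hm)

theorem degree_C_mul_le (r : R) : (C r * p).degree ≤ p.degree :=
  degree_mul_le.trans <| by simpa using add_le_add_left (degree_C_le r) p.degree

theorem coeff_eq_zero_of_degree_lt {n : ℤ} (h : p.degree < n) : p.coeff n = 0 :=
  AddMonoidAlgebra.coeff_eq_zero_of_not_le_supDegree (D := WithBot.some) h.not_ge

theorem le_of_mem_support_of_degree_le {n m : ℤ} (h : p.degree ≤ n)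
    (hm : m ∈ p.coeff.support) : m ≤ n :=
  WithBot.coe_le_coe.1 <| (Finset.le_max hm).trans h

theorem coeff_mul_of_degree_le {a b : ℤ} (hp : p.degree ≤ a) (hq : q.degree ≤ b) :
    (p * q).coeff (a + b) = p.coeff a * q.coeff b :=
  AddMonoidAlgebra.coeff_mul_add_of_uniqueAdd fun x y hx hy hxy => by
    have := le_of_mem_support_of_degree_le hp hx
    have := le_of_mem_support_of_degree_le hq hy
    omega

end Semiring

theorem degree_invert_le [CommSemiring R] {p : R[T;T⁻¹]} {n : ℤ}
    (h : ∀ m ∈ p.coeff.support, n ≤ m) : (invert p).degree ≤ ↑(-n) :=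
  Finset.max_le fun x hx => WithBot.coe_le_coe.2 <| by
    have := h (-x) (by simpa using hx)
    omega

section Ring

variable [Ring R]

theorem degree_sub_le {p q : R[T;T⁻¹]} : (p - q).degree ≤ max p.degree q.degree :=
  AddMonoidAlgebra.supDegree_sub_le (D := WithBot.some)

theorem degree_T_sub_one_le {n : ℤ} (hn : 0 ≤ n) : (T n - 1 : R[T;T⁻¹]).degree ≤ n :=
  degree_sub_le.trans <| max_le (degree_T_le n) <|
    (T_zero (R := R) ▸ degree_T_le 0).trans (WithBot.coe_le_coe.2 hn)

theorem coeff_T_sub_one_self {n : ℤ} (hn : n ≠ 0) : (T n - 1 : R[T;T⁻¹]).coeff n = 1 := by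
  simp [← T_zero, hn.symm]

end Ring

end LaurentPolynomial

theorem degree_star_rhs_le {R : Type*} [CommRing R] (u v : R) {f : R[T;T⁻¹]} {a b : ℤ}
    (ha : f.degree ≤ a) (hb : (invert f).degree ≤ b) (ha0 : 0 < a) (hb0 : 0 ≤ b) :
    (C (u * v - 1) * (T 2 * invert f - f) - C (u - v) * (T 1 * f - T 1 * invert f)
      + C (u * v) * (T 2 - 1)).degree ≤ ↑(a + b + 1) := by
  refine degree_add_le.trans <| max_le (degree_sub_le.trans <| max_le ?_ ?_) ?_
  · refine (degree_C_mul_le _).trans <| degree_sub_le.trans <| max_le ?_ ?_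
    · exact degree_T_mul_le_of_le hb (by omega)
    · exact ha.trans <| by exact_mod_cast (by omega : a ≤ a + b + 1)
  · refine (degree_C_mul_le _).trans <| degree_sub_le.trans <| max_le ?_ ?_
    · exact degree_T_mul_le_of_le ha (by omega)
    · exact degree_T_mul_le_of_le hb (by omega)
  · exact (degree_C_mul_le _).trans <| (degree_T_sub_one_le zero_le_two).trans <|
      WithBot.coe_le_coe.2 (by omega : (2 : ℤ) ≤ a + b + 1)

/-- If a solution of (★) has a nonzero coefficient in some positive degree,
then its constant coefficient vanishes. -/
theorem statement6 {K : Type*} [Field K] (u v : K) (f : K[T;T⁻¹])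
    (hf : SatStar u v f) (hpos : ∃ n : ℤ, 0 < n ∧ f.coeff n ≠ 0) :
    f.coeff 0 = 0 := by
  by_contra h0
  obtain ⟨n, hn, hfn⟩ := hpos
  have hne : f.coeff.support.Nonempty := ⟨0, Finsupp.mem_support_iff.2 h0⟩
  set N := f.coeff.support.max' hne
  set M := f.coeff.support.min' hne
  have hN : f.degree ≤ N := (Finset.coe_max' hne).ge
  have hM : (invert f).degree ≤ ↑(-M) := degree_invert_le fun m hm => Finset.min'_le _ m hm
  have hN_pos : 0 < N := hn.trans_le (Finset.le_max' _ n (Finsupp.mem_support_iff.2 hfn))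
  have hM_nonpos : M ≤ 0 := Finset.min'_le _ 0 (Finsupp.mem_support_iff.2 h0)
  have key := congrArg (fun p : K[T;T⁻¹] => p.coeff (2 + (N + -M))) hf
  rw [coeff_mul_of_degree_le (degree_T_sub_one_le zero_le_two) (degree_mul_le_of_le hN hM),
    coeff_mul_of_degree_le hN hM, coeff_T_sub_one_self two_ne_zero, invert_apply, neg_neg,
    one_mul] at key
  rw [coeff_eq_zero_of_degree_lt ((degree_star_rhs_le u v hN hM hN_pos (by omega)).trans_lt
    (WithBot.coe_lt_coe.2 (by omega)))] at key
  exact mul_ne_zero (Finsupp.mem_support_iff.1 (Finset.max'_mem _ hne))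
    (Finsupp.mem_support_iff.1 (Finset.min'_mem _ hne)) key
end

section
/- For any natural number d ≥ 0 and any f ∈ K[X,X⁻¹], f satisfies equation (★) if and only if X^{2d}·f − R_d satisfies equation (★). -/
open LaurentPolynomial

lemma satStar_step {K : Type*} [Field K] (u v : K) (f : K[T;T⁻¹]) :
    SatStar u v f ↔
      SatStar u v (T 2 * f - (C (u * v - 1) * T 2 + C (u - v) * T 1)) := by
  have hxy : (T 1 : K[T;T⁻¹]) * T (-1) = 1 := by
    rw [← T_add]; norm_num
  have h2 : (T 2 : K[T;T⁻¹]) = T 1 * T 1 := by rw [← T_add]; norm_num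
  have h2' : (T (-2) : K[T;T⁻¹]) = T (-1) * T (-1) := by rw [← T_add]; norm_num
  unfold SatStar
  set x : K[T;T⁻¹]:= T 1 with hx
  set y : K[T;T⁻¹] := T (-1) with hy
  set fv : K[T;T⁻¹] := invert f with hfv
  set B : K[T;T⁻¹] := C (u * v - 1) with hB
  set Cc : K[T;T⁻¹] := C (u - v) with hCc
  have hinv : invert (T 2 * f - (B * T 2 + Cc * T 1)) =
      y * y * fv - (B * (y * y) + Cc * y) := by
    rw [hB, hCc, hy, hfv]
    simp only [map_sub, map_mul, map_add, invert_T, invert_C]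
    rw [h2']
  rw [hinv, h2]
  set Q : K[T;T⁻¹] := C (u * v) with hQ
  constructor <;> intro h
  · linear_combination h + (f*B - f*fv + x*B*Cc - x*fv*Cc + x*f*Cc + x*y*f*B
      - x*y*f*fv + x^2*Cc^2 + x^2*B^2 - x^2*fv*B - x^2*f*B + x^2*f*fv
      + x^2*y*B*Cc - x^2*y*fv*Cc + x^3*B*Cc - x^3*f*Cc + x^3*y*B^2
      - x^3*y*fv*B - x^3*y*f*B + x^3*y*f*fv) * hxy
  · linear_combination h - (f*B - f*fv + x*B*Cc - x*fv*Cc + x*f*Cc + x*y*f*B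
      - x*y*f*fv + x^2*Cc^2 + x^2*B^2 - x^2*fv*B - x^2*f*B + x^2*f*fv
      + x^2*y*B*Cc - x^2*y*fv*Cc + x^3*B*Cc - x^3*f*Cc + x^3*y*B^2
      - x^3*y*fv*B - x^3*y*f*B + x^3*y*f*fv) * hxy

/-- `f` is a solution of (★) if and only if `X^{2d}·f − R_d` is a solution of (★). -/
theorem statement7 {K : Type*} [Field K] (u v : K) (d : ℕ) (f : K[T;T⁻¹]) :
    SatStar u v f ↔ SatStar u v (T (2 * (d : ℤ)) * f - Rpoly u v d) := by
  induction d with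
  | zero => simp [Rpoly, T_zero]
  | succ d ih =>
    rw [ih, satStar_step]
    have key : T 2 * (T (2 * (d : ℤ)) * f - Rpoly u v d)
        - (C (u * v - 1) * T 2 + C (u - v) * T 1)
        = T (2 * ((d : ℤ) + 1)) * f - Rpoly u v (d + 1) := by
      rw [Rpoly, Rpoly, Finset.sum_range_succ', mul_sub, Finset.mul_sum]
      have hT : (T (2 * ((d : ℤ) + 1)) : K[T;T⁻¹]) = T 2 * T (2 * (d : ℤ)) := by
        rw [show (2 * ((d : ℤ) + 1)) = 2 + 2 * (d : ℤ) by ring, T_add]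
      rw [hT]
      have hsum : ∀ j ∈ Finset.range d,
          T 2 * (C (u * v - 1) * T (2 * (j : ℤ) + 2) + C (u - v) * T (2 * (j : ℤ) + 1))
          = C (u * v - 1) * T (2 * ((j : ℤ) + 1) + 2) + C (u - v) * T (2 * ((j : ℤ) + 1) + 1) := by
        intro j _
        rw [show (2 * ((j : ℤ) + 1) + 2) = 2 + (2 * (j : ℤ) + 2) by ring,
          show (2 * ((j : ℤ) + 1) + 1) = 2 + (2 * (j : ℤ) + 1) by ring,
          T_add 2 (2 * (j : ℤ) + 2), T_add 2 (2 * (j : ℤ) + 1)]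
        ring
      rw [Finset.sum_congr rfl hsum]
      push_cast
      simp only [show ∀ x : ℤ, 2 * (x + 1) + 2 = 4 + x * 2 from fun x => by ring,
        show ∀ x : ℤ, 2 * (x + 1) + 1 = 3 + x * 2 from fun x => by ring]
      ring_nf
    rw [show ((d : ℤ) + 1) = ((d + 1 : ℕ) : ℤ) by push_cast; ring] at key
    rw [key]
end

section
/- Suppose f ∈ K[X,X⁻¹] satisfies equation (★) and the support of f is contained in the non-positive integers (f has only non-positive powers of X). Then there exists a natural number d ≥ 0 such that f is one of: X^{−2d}·(R_d + Q); X^{−2d}·(R_d − 1); X^{−2d}·(R_d + b + u·X^{−1}); X^{−2d}·(R_d + b − v·X^{−1}). -/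
open LaurentPolynomial

/-!
Write `f = p(X⁻¹)` with `p ∈ K[X]`. Multiplying (★) by `X ^ deg p` gives a polynomial identity
between `p` and its reverse, whose coefficients of `1` and `X` force `p = b + c X + X² q` as soon
as `deg p ≥ 2`. Since (★) is invariant under `g ↦ b + c X⁻¹ + X⁻² g`, induction on `deg p`
reduces to `deg p ≤ 1`, where the same two coefficients give `(p - Q) (p + 1) = 0` for a
constant `p` and `p(0) = b`, `(p₁ - u) (p₁ + v) = 0` for `p = b + p₁ X`: the four families with
`d = 0`.
-/

open Polynomial (X toLaurent)
open scoped Polynomial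

theorem exists_toLaurent_eq_of_support_nonneg {R : Type*} [Semiring R] {f : R[T;T⁻¹]}
    (h : ∀ n ∈ f.coeff.support, 0 ≤ n) : ∃ p : R[X], toLaurent p = f := by
  refine ⟨∑ n ∈ f.coeff.support, Polynomial.monomial n.toNat (f.coeff n), ?_⟩
  rw [map_sum]
  conv_rhs => rw [← AddMonoidAlgebra.sum_coeff_single f]
  refine Finset.sum_congr rfl fun n hn => ?_
  rw [Polynomial.toLaurent_C_mul_T, ← single_eq_C_mul_T, Int.toNat_of_nonneg (h n hn)]

theorem invert_toLaurent_C_add_C_mul_X_add_X_sq_mul {R : Type*} [CommSemiring R] (a₀ a₁ : R)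
    (q : R[X]) :
    invert (toLaurent (Polynomial.C a₀ + Polynomial.C a₁ * X + X ^ 2 * q)) =
      C a₀ + C a₁ * T (-1) + T (-2) * invert (toLaurent q) := by
  simp

section

variable {K : Type*} [Field K] {u v : K}

theorem SatStar.of_shift {g : K[T;T⁻¹]}
    (hg : SatStar u v (C (u * v - 1) + C (u - v) * T (-1) + T (-2) * g)) : SatStar u v g := by
  have hT2 : (T 2 : K[T;T⁻¹]) = T 1 ^ 2 := by simp [T_pow]
  have hf : T 1 ^ 2 * (C (u * v - 1) + C (u - v) * T (-1) + T (-2) * g) =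
      C (u * v - 1) * T 1 ^ 2 + C (u - v) * T 1 + g := by
    simp only [T_pow, mul_add, ← mul_assoc, ← T_add]
    norm_num
  have hF : invert (C (u * v - 1) + C (u - v) * T (-1) + T (-2) * g) =
      C (u * v - 1) + C (u - v) * T 1 + T 1 ^ 2 * invert g := by
    simp
  generalize C (u * v - 1) + C (u - v) * T (-1) + T (-2) * g = f at hf hF hg
  unfold SatStar at *
  -- after multiplying by `X²` only nonnegative powers of `X` remain, and the two sides of (★)
  -- for `f` and for `g` agree as polynomials in `X`, `f`, `g` and `g∨` modulo `hf` and `hF`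
  apply (isUnit_T (R := K) 2).mul_left_cancel
  rw [hT2] at hg ⊢
  linear_combination T 1 ^ 2 * hg
    - ((T 1 ^ 2 - 1) * invert f + C (u * v - 1) + C (u - v) * T 1) * hf
    - ((T 1 ^ 2 - 1) * (C (u * v - 1) * T 1 ^ 2 + C (u - v) * T 1 + g)
        - C (u * v - 1) * T 1 ^ 4 - C (u - v) * T 1 ^ 3) * hF

theorem SatStar.reverse_mul_eq {p : K[X]} (hp : SatStar u v (invert (toLaurent p))) :
    (X ^ 2 - 1) * (p.reverse * p) =
      Polynomial.C (u * v - 1) * (X ^ (p.natDegree + 2) * p - p.reverse)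
        - Polynomial.C (u - v) * (X * p.reverse - X ^ (p.natDegree + 1) * p)
        + Polynomial.C (u * v) * (X ^ (p.natDegree + 2) - X ^ p.natDegree) := by
  apply Polynomial.toLaurent_injective
  have hinv : invert (invert (toLaurent p)) = toLaurent p := involutive_invert _
  unfold SatStar at hp
  rw [hinv] at hp
  simp only [map_mul, map_sub, map_one] at hp
  simp only [map_mul, map_sub, map_add, map_one, Polynomial.toLaurent_C,
    Polynomial.toLaurent_X_pow, Polynomial.toLaurent_X, toLaurent_reverse]
  push_cast
  rw [T_add, T_add]
  linear_combination T (p.natDegree : ℤ) * hp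

theorem SatStar.leadingCoeff_mul_coeff_zero {p : K[X]} (hp : SatStar u v (invert (toLaurent p))) :
    p.leadingCoeff * p.coeff 0 =
      (u * v - 1) * p.leadingCoeff + if p.natDegree = 0 then u * v else 0 := by
  have h := congrArg (Polynomial.eval 0) hp.reverse_mul_eq
  simp only [Polynomial.eval_mul, Polynomial.eval_sub, Polynomial.eval_add, Polynomial.eval_pow,
    Polynomial.eval_X, Polynomial.eval_C, Polynomial.eval_one,
    ← Polynomial.coeff_zero_eq_eval_zero, Polynomial.coeff_zero_reverse, pow_succ, mul_zero,
    zero_mul, zero_pow_eq] at h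
  split_ifs at h ⊢ <;> first | omega | linear_combination -h

theorem SatStar.coeff_one_eq {p : K[X]} (hp : SatStar u v (invert (toLaurent p)))
    (hn : p.natDegree ≠ 0) :
    p.leadingCoeff * p.coeff 1 + p.coeff (p.natDegree - 1) * p.coeff 0 =
      (u * v - 1) * p.coeff (p.natDegree - 1) + (u - v) * p.leadingCoeff
        + if p.natDegree = 1 then u * v else 0 := by
  have h := congrArg (Polynomial.coeff · 1) hp.reverse_mul_eq
  simp only [Polynomial.coeff_add, Polynomial.coeff_sub, Polynomial.coeff_C_mul,
    Polynomial.coeff_X_pow_mul', Polynomial.coeff_X_mul, Polynomial.coeff_X_pow, sub_mul,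
    one_mul] at h
  rw [Polynomial.mul_coeff_one, Polynomial.coeff_zero_reverse, Polynomial.coeff_one_reverse,
    Polynomial.nextCoeff, if_neg hn] at h
  split_ifs at h ⊢ <;> first | omega | linear_combination -h

def starTails (u v : K) : Set K[T;T⁻¹] :=
  {C (u * v), -1, C (u * v - 1) + C u * T (-1), C (u * v - 1) - C v * T (-1)}

theorem T_mul_Rpoly_zero_add (E : K[T;T⁻¹]) :
    T (-(2 * ((0 : ℕ) : ℤ))) * (Rpoly u v 0 + E) = E := by
  simp [Rpoly]

theorem T_mul_Rpoly_succ_add (d : ℕ) (E : K[T;T⁻¹]) :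
    T (-(2 * ((d + 1 : ℕ) : ℤ))) * (Rpoly u v (d + 1) + E) =
      C (u * v - 1) + C (u - v) * T (-1) + T (-2) * (T (-(2 * (d : ℤ))) * (Rpoly u v d + E)) := by
  have h₁ : (T (-(2 * ((d : ℤ) + 1))) : K[T;T⁻¹]) = T (-2) * T (-(2 * (d : ℤ))) := by
    rw [← T_add]; ring_nf
  have h₂ : (T (-(2 * ((d : ℤ) + 1))) * T (2 * (d : ℤ) + 2) : K[T;T⁻¹]) = 1 := by
    rw [← T_add, ← T_zero]; ring_nf
  have h₃ : (T (-(2 * ((d : ℤ) + 1))) * T (2 * (d : ℤ) + 1) : K[T;T⁻¹]) = T (-1) := by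
    rw [← T_add]; ring_nf
  rw [Rpoly, Finset.sum_range_succ, ← Rpoly]
  push_cast
  linear_combination (Rpoly u v d + E) * h₁ + C (u * v - 1) * h₂ + C (u - v) * h₃

theorem SatStar.mem_starTails_of_natDegree_eq_zero {p : K[X]}
    (hp : SatStar u v (invert (toLaurent p))) (h0 : p.natDegree = 0) :
    invert (toLaurent p) ∈ starTails u v := by
  have hcoeff := hp.leadingCoeff_mul_coeff_zero
  rw [Polynomial.leadingCoeff, h0, if_pos rfl] at hcoeff
  have hquad : (p.coeff 0 - u * v) * (p.coeff 0 + 1) = 0 := by linear_combination hcoeff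
  rw [Polynomial.eq_C_of_natDegree_eq_zero h0, Polynomial.toLaurent_C, invert_C]
  simp only [starTails, Set.mem_insert_iff, Set.mem_singleton_iff]
  rcases mul_eq_zero.mp hquad with h | h
  · left; rw [sub_eq_zero.mp h]
  · right; left; rw [eq_neg_of_add_eq_zero_left h, map_neg, map_one]

theorem SatStar.mem_starTails_of_natDegree_eq_one {p : K[X]}
    (hp : SatStar u v (invert (toLaurent p))) (h1 : p.natDegree = 1) :
    invert (toLaurent p) ∈ starTails u v := by
  have hlc : p.leadingCoeff = p.coeff 1 := by rw [Polynomial.leadingCoeff, h1]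
  have hne : p.coeff 1 ≠ 0 := by
    rw [← hlc, Polynomial.leadingCoeff_ne_zero]; rintro rfl; simp at h1
  have h₀ := hp.leadingCoeff_mul_coeff_zero
  have h₁ := hp.coeff_one_eq (by omega)
  rw [hlc, h1, if_neg one_ne_zero] at h₀
  rw [hlc, h1, if_pos rfl, Nat.sub_self] at h₁
  have hb : p.coeff 0 = u * v - 1 := mul_left_cancel₀ hne (by linear_combination h₀)
  have hquad : (p.coeff 1 - u) * (p.coeff 1 + v) = 0 := by
    linear_combination h₁ - p.coeff 0 * hb
  rw [Polynomial.eq_X_add_C_of_natDegree_le_one h1.le, hb]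
  simp only [map_add, map_mul, Polynomial.toLaurent_C, Polynomial.toLaurent_X, invert_C, invert_T,
    starTails, Set.mem_insert_iff, Set.mem_singleton_iff]
  rcases mul_eq_zero.mp hquad with h | h
  · right; right; left; rw [sub_eq_zero.mp h]; ring
  · right; right; right; rw [eq_neg_of_add_eq_zero_left h, map_neg]; ring

theorem SatStar.exists_eq_T_mul_Rpoly_add (p : K[X]) (hp : SatStar u v (invert (toLaurent p))) :
    ∃ d : ℕ, ∃ E ∈ starTails u v,
      invert (toLaurent p) = T (-(2 * (d : ℤ))) * (Rpoly u v d + E) := by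
  induction hn : p.natDegree using Nat.strong_induction_on generalizing p with
  | _ n ih =>
  rcases n with _ | _ | n
  · exact ⟨0, _, hp.mem_starTails_of_natDegree_eq_zero hn, (T_mul_Rpoly_zero_add _).symm⟩
  · exact ⟨0, _, hp.mem_starTails_of_natDegree_eq_one hn, (T_mul_Rpoly_zero_add _).symm⟩
  have hne : p.leadingCoeff ≠ 0 := by
    rw [Polynomial.leadingCoeff_ne_zero]; rintro rfl; simp at hn
  have hb : p.coeff 0 = u * v - 1 := by
    have h := hp.leadingCoeff_mul_coeff_zero
    rw [hn, if_neg (by omega)] at h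
    exact mul_left_cancel₀ hne (by linear_combination h)
  have hc : p.coeff 1 = u - v := by
    have h := hp.coeff_one_eq (by omega)
    rw [hn, if_neg (by omega), hb] at h
    exact mul_left_cancel₀ hne (by linear_combination h)
  have hsplit : p = Polynomial.C (u * v - 1) + Polynomial.C (u - v) * X + X ^ 2 * p.divX.divX := by
    have h₀ := p.X_mul_divX_add
    have h₁ := p.divX.X_mul_divX_add
    rw [hb] at h₀
    rw [Polynomial.coeff_divX, hc] at h₁
    linear_combination -h₀ - X * h₁
  have hq := invert_toLaurent_C_add_C_mul_X_add_X_sq_mul (u * v - 1) (u - v) p.divX.divX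
  rw [← hsplit] at hq
  obtain ⟨d, E, hE, hd⟩ := ih n (by omega) p.divX.divX (hq ▸ hp).of_shift (by
    simp [Polynomial.natDegree_divX_eq_natDegree_tsub_one, hn])
  exact ⟨d + 1, E, hE, by rw [T_mul_Rpoly_succ_add, ← hd, hq]⟩

end

/-- A solution of (★) supported in non-positive degrees belongs to one of the
four families (i)–(iv) of Lemma 3.4 of the paper. -/
theorem statement8 {K : Type*} [Field K] (u v : K) (f : K[T;T⁻¹])
    (hf : SatStar u v f) (hsupp : ∀ n ∈ f.coeff.support, n ≤ 0) :
    ∃ d : ℕ,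
      f = T (-(2 * (d : ℤ))) * (Rpoly u v d + C (u * v)) ∨
      f = T (-(2 * (d : ℤ))) * (Rpoly u v d - 1) ∨
      f = T (-(2 * (d : ℤ))) * (Rpoly u v d + C (u * v - 1) + C u * T (-1)) ∨
      f = T (-(2 * (d : ℤ))) * (Rpoly u v d + C (u * v - 1) - C v * T (-1)) := by
  obtain ⟨p, rfl⟩ : ∃ p : K[X], invert (toLaurent p) = f := by
    obtain ⟨p, hp⟩ := exists_toLaurent_eq_of_support_nonneg (f := invert f) fun n hn =>
      neg_nonpos.mp (hsupp (-n) (by simpa using hn))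
    exact ⟨p, by rw [hp, involutive_invert]⟩
  obtain ⟨d, E, hE, hd⟩ := hf.exists_eq_T_mul_Rpoly_add p
  refine ⟨d, ?_⟩
  simp only [starTails, Set.mem_insert_iff, Set.mem_singleton_iff] at hE
  rw [hd]
  rcases hE with rfl | rfl | rfl | rfl
  · left; rfl
  · right; left; ring
  · right; right; left; ring
  · right; right; right; ring
end

section
/- Suppose there exists a unit g ∈ A with T(g) = τ·g. Then for f ∈ A the following are equivalent: (1) multiplication by f commutes with T, i.e. T(f·x) = f·T(x) for all x ∈ A; (2) f^s = f. -/
open AddMonoidAlgebra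

/-- The Laurent polynomial ring `K[X^{±1}, Y^{±1}]` in two variables,
realized as the monoid algebra of `ℤ × ℤ` over `K`. -/
abbrev LP2 (K : Type*) [Field K] := AddMonoidAlgebra K (ℤ × ℤ)

/-- The variable `X`. -/
noncomputable def Xv (K : Type*) [Field K] : LP2 K := of' K (ℤ × ℤ) (1, 0)

/-- The variable `Y`. -/
noncomputable def Yv (K : Type*) [Field K] : LP2 K := of' K (ℤ × ℤ) (0, 1)

/-- `X⁻¹`. -/
noncomputable def Xinv (K : Type*) [Field K] : LP2 K := of' K (ℤ × ℤ) (-1, 0)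

/-- `Y⁻¹`. -/
noncomputable def Yinv (K : Type*) [Field K] : LP2 K := of' K (ℤ × ℤ) (0, -1)

/-- The `K`-algebra involution of `K[X^{±1}, Y^{±1}]` swapping `X` and `Y`. -/
noncomputable def swapXY (K : Type*) [Field K] : LP2 K ≃ₐ[K] LP2 K :=
  AddMonoidAlgebra.domCongr K K (AddEquiv.prodComm : ℤ × ℤ ≃+ ℤ × ℤ)

/-!
Specialising the Bernstein relation to `h = f` gives
`(X - Y)·(𝒯(f·x) - f^s·𝒯(x)) = (τ - 1)·X·(f - f^s)·x`.
If `f^s = f` the right side vanishes, and `X - Y` is not a zero divisor in the domain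
`K[X^{±1}, Y^{±1}]`. Conversely, if `f` commutes with `𝒯`, taking `x = g` with `𝒯 g = τ g`
collapses the relation to `(X - τY)·(f - f^s)·g = 0`, and `X - τY ≠ 0`, `g ≠ 0`.
-/

theorem Xv_sub_smul_Yv_ne_zero {K : Type*} [Field K] (c : K) : Xv K - c • Yv K ≠ 0 := by
  intro h
  have hcoeff := congrArg (fun p : LP2 K => p.coeff (1, 0)) h
  simp [Xv, Yv] at hcoeff

theorem Xv_sub_Yv_ne_zero {K : Type*} [Field K] : Xv K - Yv K ≠ 0 := by
  simpa using Xv_sub_smul_Yv_ne_zero (1 : K)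

section Bernstein

variable {K : Type*} [Field K] {τ : K} {𝒯 : LP2 K →ₗ[K] LP2 K}
  (hcomm : ∀ h x : LP2 K,
    (Xv K - Yv K) * (𝒯 (h * x) - swapXY K h * 𝒯 x)
      = (τ - 1) • (Xv K * ((h - swapXY K h) * x)))
include hcomm

theorem map_mul_eq_mul_map_of_swapXY_eq {f : LP2 K} (hf : swapXY K f = f) (x : LP2 K) :
    𝒯 (f * x) = f * 𝒯 x := by
  have h := hcomm f x
  rw [hf, sub_self, zero_mul, mul_zero, smul_zero] at h
  exact sub_eq_zero.mp ((mul_eq_zero.mp h).resolve_left Xv_sub_Yv_ne_zero)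

theorem swapXY_eq_of_map_mul_eq_mul_map {g : LP2 K} (hg : g ≠ 0) (hTg : 𝒯 g = τ • g)
    {f : LP2 K} (hf : ∀ x : LP2 K, 𝒯 (f * x) = f * 𝒯 x) : swapXY K f = f := by
  have h := hcomm f g
  rw [hf g, hTg] at h
  have hzero : (Xv K - τ • Yv K) * ((f - swapXY K f) * g) = 0 := by
    simp only [Algebra.smul_def, map_sub, map_one] at h ⊢
    linear_combination h
  have hfg := (mul_eq_zero.mp hzero).resolve_left (Xv_sub_smul_Yv_ne_zero τ)
  exact (sub_eq_zero.mp ((mul_eq_zero.mp hfg).resolve_right hg)).symm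

end Bernstein

theorem statement12_general {K : Type*} [Field K] (τ : K)
    (𝒯 : LP2 K →ₗ[K] LP2 K)
    (hcomm : ∀ h x : LP2 K,
      (Xv K - Yv K) * (𝒯 (h * x) - swapXY K h * 𝒯 x)
        = (τ - 1) • (Xv K * ((h - swapXY K h) * x)))
    (g : LP2 K) (hg : IsUnit g) (hTg : 𝒯 g = τ • g)
    (f : LP2 K) :
    (∀ x : LP2 K, 𝒯 (f * x) = f * 𝒯 x) ↔ swapXY K f = f :=
  ⟨swapXY_eq_of_map_mul_eq_mul_map hcomm hg.ne_zero hTg,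
    map_mul_eq_mul_map_of_swapXY_eq hcomm⟩

/-- Suppose `𝒯` satisfies the quadratic relation `𝒯² = (τ−1)·𝒯 + τ·id` and the
denominator-cleared Bernstein relation
`(X − Y)·(𝒯(h·x) − h^s·𝒯(x)) = (τ−1)·X·(h − h^s)·x`, and that there is a unit
`g` with `𝒯(g) = τ·g`. Then multiplication by `f` commutes with `𝒯` if and only
if `f^s = f`. -/
theorem statement12 {K : Type*} [Field K] (τ : K)
    (𝒯 : LP2 K →ₗ[K] LP2 K)
    (hquad : ∀ x : LP2 K, 𝒯 (𝒯 x) = (τ - 1) • 𝒯 x + τ • x)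
    (hcomm : ∀ h x : LP2 K,
      (Xv K - Yv K) * (𝒯 (h * x) - swapXY K h * 𝒯 x)
        = (τ - 1) • (Xv K * ((h - swapXY K h) * x)))
    (g : LP2 K) (hg : IsUnit g) (hTg : 𝒯 g = τ • g)
    (f : LP2 K) :
    (∀ x : LP2 K, 𝒯 (f * x) = f * 𝒯 x) ↔ swapXY K f = f :=
  statement12_general τ 𝒯 hcomm g hg hTg f
end

section
/- For every x ∈ A one has T(X⁻¹·T(x)) = τ·Y⁻¹·x. Equivalently (when τ is nonzero, so that T is invertible with T⁻¹ = τ⁻¹·(T − (τ−1)·id)), T⁻¹ ∘ (multiplication by Y⁻¹) = τ⁻¹ · (multiplication by X⁻¹) ∘ T as operators on A. -/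
open AddMonoidAlgebra

/-!
Specialising the Bernstein relation to `h = X⁻¹` (so `h^s = Y⁻¹`) and cancelling the nonzero
factor `X − Y` gives `T(X⁻¹·u) = Y⁻¹·T(u) − (τ−1)·Y⁻¹·u`. Applied to `u = T(x)`, the quadratic
relation turns `Y⁻¹·T(T(x))` into `(τ−1)·Y⁻¹·T(x) + τ·Y⁻¹·x`, and the `(τ−1)` terms cancel.
-/

section Bernstein

variable {K R : Type*} [CommRing K] [CommRing R] [IsDomain R] [Algebra K R]
  (T : R →ₗ[K] R) {X Y X' Y' : R} {c : K}

theorem apply_mul_inv_eq_of_bernstein (hX : X * X' = 1) (hY : Y * Y' = 1) (hXY : X ≠ Y)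
    (hT : ∀ u, (X - Y) * (T (X' * u) - Y' * T u) = c • (X * ((X' - Y') * u))) (u : R) :
    T (X' * u) = Y' * T u - c • (Y' * u) := by
  have hrhs : X * ((X' - Y') * u) = (X - Y) * (-(Y' * u)) := by
    linear_combination u * hX - u * hY
  have h : T (X' * u) - Y' * T u = c • -(Y' * u) :=
    mul_left_cancel₀ (sub_ne_zero.mpr hXY) (by rw [hT u, hrhs, mul_smul_comm])
  rw [smul_neg, sub_eq_iff_eq_add'] at h
  rw [h]
  abel

theorem apply_mul_inv_apply_of_bernstein {τ : K} (hX : X * X' = 1) (hY : Y * Y' = 1)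
    (hXY : X ≠ Y) (hquad : ∀ x, T (T x) = (τ - 1) • T x + τ • x)
    (hT : ∀ u, (X - Y) * (T (X' * u) - Y' * T u) = (τ - 1) • (X * ((X' - Y') * u))) (x : R) :
    T (X' * T x) = τ • (Y' * x) := by
  rw [apply_mul_inv_eq_of_bernstein T hX hY hXY hT, hquad, mul_add, mul_smul_comm,
    mul_smul_comm]
  abel

end Bernstein

theorem Xv_ne_Yv (K : Type*) [Field K] : Xv K ≠ Yv K := by
  intro h
  have := congrArg (fun p : LP2 K => p.coeff (1, 0)) h
  simp [Xv, Yv, of'_apply] at this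

theorem Xv_mul_Xinv (K : Type*) [Field K] : Xv K * Xinv K = 1 := by
  simp [Xv, Xinv, of'_apply, single_mul_single, one_def]
  rfl

theorem Yv_mul_Yinv (K : Type*) [Field K] : Yv K * Yinv K = 1 := by
  simp [Yv, Yinv, of'_apply, single_mul_single, one_def]
  rfl

theorem swapXY_Xinv (K : Type*) [Field K] : swapXY K (Xinv K) = Yinv K := by
  simp [swapXY, Xinv, Yinv, of'_apply]

/-- Suppose `𝒯` satisfies the quadratic relation `𝒯² = (τ−1)·𝒯 + τ·id` and the
denominator-cleared Bernstein relation
`(X − Y)·(𝒯(h·x) − h^s·𝒯(x)) = (τ−1)·X·(h − h^s)·x`. Then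
`𝒯(X⁻¹·𝒯(x)) = τ·Y⁻¹·x` for every `x`; equivalently (when `τ ≠ 0`),
`𝒯⁻¹ ∘ (mult. by Y⁻¹) = τ⁻¹·(mult. by X⁻¹) ∘ 𝒯`. -/
theorem statement13 {K : Type*} [Field K] (τ : K)
    (𝒯 : LP2 K →ₗ[K] LP2 K)
    (hquad : ∀ x : LP2 K, 𝒯 (𝒯 x) = (τ - 1) • 𝒯 x + τ • x)
    (hcomm : ∀ h x : LP2 K,
      (Xv K - Yv K) * (𝒯 (h * x) - swapXY K h * 𝒯 x)
        = (τ - 1) • (Xv K * ((h - swapXY K h) * x)))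
    (x : LP2 K) :
    𝒯 (Xinv K * 𝒯 x) = τ • (Yinv K * x) := by
  refine apply_mul_inv_apply_of_bernstein 𝒯 (Xv_mul_Xinv K) (Yv_mul_Yinv K) (Xv_ne_Yv K) hquad
    (fun u => ?_) x
  simpa only [swapXY_Xinv] using hcomm (Xinv K) u
end

section
/- Let g ∈ A be a unit and d ≥ 0 a natural number. Then: if T(g) = X^{−2d}·(R_d + Q)·g, then T(X^{−d}·g) = Q·(X^{−d}·g); if T(g) = X^{−2d}·(R_d − 1)·g, then T(X^{−d}·g) = −(X^{−d}·g); if T(g) = (Q·X^{2d} − R_d)·g, then T(X^{d}·g) = Q·(X^{d}·g); and if T(g) = (−X^{2d} − R_d)·g, then T(X^{d}·g) = −(X^{d}·g). -/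
/-! With `r = b·X² + c·X`, the cleared Bernstein relation for `h = X^{∓d}` and `𝒯 g = f·g` reads
`(X² − 1)·𝒯(h·g) = ((X² − 1)·h∨·f + r·(h − h∨))·g`, so `h·g` is a `μ`-eigenvector as soon as
`(X² − 1)·(h∨·f − μ·h) = r·(h∨ − h)`. In all four cases `h∨·f − μ·h = ±X^{−d}·R_d`, and the
telescoping identity `(X² − 1)·R_d = r·(X^{2d} − 1)` gives exactly this. -/

open LaurentPolynomial

namespace LaurentPolynomial

variable {R : Type*}

lemma T_mul_T_neg [Semiring R] (n : ℤ) : (T n * T (-n) : R[T;T⁻¹]) = 1 := by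
  rw [← T_add, add_neg_cancel, T_zero]

lemma T_two_sub_one_ne_zero_s14 [Ring R] [Nontrivial R] : (T 2 - 1 : R[T;T⁻¹]) ≠ 0 := by
  intro h
  have := congrArg degree (sub_eq_zero.mp h)
  rw [← T_zero, degree_T, degree_T] at this
  norm_num at this

lemma apply_mul_eq_of_bernstein [CommRing R] [IsDomain R] {𝒯 : R[T;T⁻¹] → R[T;T⁻¹]} {r : R[T;T⁻¹]}
    (hcomm : ∀ h x, (T 2 - 1) * (𝒯 (h * x) - invert h * 𝒯 x) = r * (h - invert h) * x)
    {f g h μ : R[T;T⁻¹]} (hg : 𝒯 g = f * g)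
    (hf : (T 2 - 1) * (invert h * f - μ * h) = r * (invert h - h)) :
    𝒯 (h * g) = μ * (h * g) := by
  refine mul_left_cancel₀ T_two_sub_one_ne_zero_s14 ?_
  linear_combination hcomm h g + (T 2 - 1) * invert h * hg + g * hf

end LaurentPolynomial

lemma T_two_sub_one_mul_Rpoly {K : Type*} [Field K] (u v : K) (d : ℕ) :
    (T 2 - 1) * Rpoly u v d = (C (u * v - 1) * T 2 + C (u - v) * T 1) * (T (2 * (d : ℤ)) - 1) := by
  induction d with
  | zero => simp [Rpoly]
  | succ d ih =>
    rw [Rpoly, Finset.sum_range_succ, ← Rpoly]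
    simp only [T_add, Nat.cast_succ, mul_add, mul_one] at ih ⊢
    linear_combination ih

lemma T_two_sub_one_mul_T_neg_mul_Rpoly {K : Type*} [Field K] (u v : K) (d : ℕ) :
    (T 2 - 1) * (T (-(d : ℤ)) * Rpoly u v d)
      = (C (u * v - 1) * T 2 + C (u - v) * T 1) * (T (d : ℤ) - T (-(d : ℤ))) := by
  rw [mul_left_comm, T_two_sub_one_mul_Rpoly, two_mul, T_add]
  linear_combination (C (u * v - 1) * T 2 + C (u - v) * T 1) * T (d : ℤ) * T_mul_T_neg (R := K) d

theorem statement14_general {K : Type*} [Field K] (u v : K)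
    (𝒯 : K[T;T⁻¹] →ₗ[K] K[T;T⁻¹])
    (hcomm : ∀ h x : K[T;T⁻¹],
      (T 2 - 1) * (𝒯 (h * x) - invert h * 𝒯 x)
        = (C (u * v - 1) * T 2 + C (u - v) * T 1) * (h - invert h) * x)
    (g : K[T;T⁻¹]) (d : ℕ) :
    (𝒯 g = T (-(2 * (d : ℤ))) * (Rpoly u v d + C (u * v)) * g →
      𝒯 (T (-(d : ℤ)) * g) = C (u * v) * (T (-(d : ℤ)) * g)) ∧
    (𝒯 g = T (-(2 * (d : ℤ))) * (Rpoly u v d - 1) * g →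
      𝒯 (T (-(d : ℤ)) * g) = -(T (-(d : ℤ)) * g)) ∧
    (𝒯 g = (C (u * v) * T (2 * (d : ℤ)) - Rpoly u v d) * g →
      𝒯 (T (d : ℤ) * g) = C (u * v) * (T (d : ℤ) * g)) ∧
    (𝒯 g = (-T (2 * (d : ℤ)) - Rpoly u v d) * g →
      𝒯 (T (d : ℤ) * g) = -(T (d : ℤ) * g)) := by
  have key := T_two_sub_one_mul_T_neg_mul_Rpoly u v d
  have hd : (T (d : ℤ) * T (-(d : ℤ)) : K[T;T⁻¹]) = 1 := T_mul_T_neg _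
  have h2d : (T (2 * (d : ℤ)) : K[T;T⁻¹]) = T d * T d := by rw [two_mul, T_add]
  have hm2d : (T (-(2 * (d : ℤ))) : K[T;T⁻¹]) = T (-d) * T (-d) := by rw [two_mul, neg_add, T_add]
  refine ⟨fun hg => ?_, fun hg => ?_, fun hg => ?_, fun hg => ?_⟩
  · refine apply_mul_eq_of_bernstein hcomm hg ?_
    rw [invert_T, neg_neg, hm2d]
    linear_combination key + (T 2 - 1) * T (-(d : ℤ)) * (Rpoly u v d + C (u * v)) * hd
  · rw [← neg_one_mul (T _ * g)]
    refine apply_mul_eq_of_bernstein hcomm hg ?_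
    rw [invert_T, neg_neg, hm2d]
    linear_combination key + (T 2 - 1) * T (-(d : ℤ)) * (Rpoly u v d - 1) * hd
  · refine apply_mul_eq_of_bernstein hcomm hg ?_
    rw [invert_T, h2d]
    linear_combination -key + (T 2 - 1) * C (u * v) * T (d : ℤ) * hd
  · rw [← neg_one_mul (T _ * g)]
    refine apply_mul_eq_of_bernstein hcomm hg ?_
    rw [invert_T, h2d]
    linear_combination -key - (T 2 - 1) * T (d : ℤ) * hd

/-- Let `𝒯` satisfy the quadratic relation `𝒯² = b·𝒯 + Q·id` and the
denominator-cleared Bernstein relation. If `g` is a unit and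
`𝒯(g) = X^{−2d}·(R_d + Q)·g` (resp. `X^{−2d}·(R_d − 1)·g`, `(Q·X^{2d} − R_d)·g`,
`(−X^{2d} − R_d)·g`), then `X^{−d}·g` (resp. `X^{−d}·g`, `X^{d}·g`, `X^{d}·g`)
is an eigenvector of `𝒯` with eigenvalue `Q` (resp. `−1`, `Q`, `−1`). -/
theorem statement14 {K : Type*} [Field K] (u v : K)
    (𝒯 : K[T;T⁻¹] →ₗ[K] K[T;T⁻¹])
    (hquad : ∀ x : K[T;T⁻¹], 𝒯 (𝒯 x) = C (u * v - 1) * 𝒯 x + C (u * v) * x)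
    (hcomm : ∀ h x : K[T;T⁻¹],
      (T 2 - 1) * (𝒯 (h * x) - invert h * 𝒯 x)
        = (C (u * v - 1) * T 2 + C (u - v) * T 1) * (h - invert h) * x)
    (g : K[T;T⁻¹]) (hg : IsUnit g) (d : ℕ) :
    (𝒯 g = T (-(2 * (d : ℤ))) * (Rpoly u v d + C (u * v)) * g →
      𝒯 (T (-(d : ℤ)) * g) = C (u * v) * (T (-(d : ℤ)) * g)) ∧
    (𝒯 g = T (-(2 * (d : ℤ))) * (Rpoly u v d - 1) * g →
      𝒯 (T (-(d : ℤ)) * g) = -(T (-(d : ℤ)) * g)) ∧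
    (𝒯 g = (C (u * v) * T (2 * (d : ℤ)) - Rpoly u v d) * g →
      𝒯 (T (d : ℤ) * g) = C (u * v) * (T (d : ℤ) * g)) ∧
    (𝒯 g = (-T (2 * (d : ℤ)) - Rpoly u v d) * g →
      𝒯 (T (d : ℤ) * g) = -(T (d : ℤ) * g)) :=
  statement14_general u v 𝒯 hcomm g d
end
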